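/- arXiv:2006.15978 — 2 statements merged into one kernel-verified Lean document; each statement's English description precedes it below -/
import Mathlib

section
/- Let G be a finite p-group, F a field of characteristic p, and M a finite-dimensional F G-module. Set n = dim_F H^0(G, M) - dim_F Ĥ^0(G, M), where Ĥ^0(G,M) = M^G / N·M with N the norm element. Then M decomposes as M ≅ M₁ ⊕ (F G)^n where M₁ is an F G-module with no projective (equivalently, no free) direct summand. -/
/-!
Every `m` with `N • m ≠ 0` generates a free direct summand `F G • m`. Pick a functional `l` with
`l (N • m) ≠ 0` and form the `F G`-linear map `φ x = ∑ g, l (g⁻¹ • x) • g`; then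
`N * φ m = l (N • m) • N ≠ 0`. An element `a` of `F G` with `N * a ≠ 0` is a unit: a nonzero left
ideal contains a nonzero `G`-fixed vector (fixed points of a `p`-group acting on a finite
`𝔽_p`-space), the fixed vectors of `F G` are the multiples of `N`, so right multiplication by `a`
is injective. Hence `φ (·) * (φ m)⁻¹` retracts `M` onto `F G • m`. Splitting off such a summand
lowers `dim N·M` by exactly one, and `dim N·M = dim H⁰ - dim Ĥ⁰`; once `N·M = 0` no free summand
is left, since `N` does not annihilate `F G`.
-/

/-- The norm element `N = ∑_{g ∈ G} g` of the group algebra. -/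
noncomputable def normElem (F : Type) (G : Type) [Field F] [Group G] [Fintype G] :
    MonoidAlgebra F G :=
  ∑ g : G, MonoidAlgebra.of F G g

/-- The fixed-point submodule `M^G = H⁰(G, M)`. -/
def fixedSub (F : Type) (G : Type) [Field F] [Group G] (M : Type) [AddCommGroup M]
    [Module F M] [Module (MonoidAlgebra F G) M]
    [SMulCommClass (MonoidAlgebra F G) F M] : Submodule F M where
  carrier := {m | ∀ g : G, MonoidAlgebra.of F G g • m = m}
  add_mem' := by
    intro a b ha hb g
    rw [smul_add, ha g, hb g]
  zero_mem' := by
    intro g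
    simp
  smul_mem' := by
    intro c m hm g
    rw [smul_comm, hm g]

/-- The action of the norm element as an `F`-linear map. -/
noncomputable def normMap (F : Type) (G : Type) [Field F] [Group G] [Fintype G]
    (M : Type) [AddCommGroup M] [Module F M] [Module (MonoidAlgebra F G) M]
    [SMulCommClass (MonoidAlgebra F G) F M] : M →ₗ[F] M where
  toFun m := normElem F G • m
  map_add' := smul_add _
  map_smul' c m := smul_comm _ c m

/-- `M` has no nonzero projective (equivalently free) direct summand. -/
def NoFreeSummand (R M : Type) [Ring R] [AddCommGroup M] [Module R M] : Prop :=
  ¬ ∃ (A B : Submodule R M), IsCompl A B ∧ Nonempty (A ≃ₗ[R] R)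

open MonoidAlgebra

theorem noFreeSummand_of_smul_eq_zero {R M : Type} [Ring R] [AddCommGroup M] [Module R M]
    {r : R} (hr : r ≠ 0) (h : ∀ x : M, r • x = 0) : NoFreeSummand R M := by
  rintro ⟨A, -, -, ⟨e⟩⟩
  have hr0 : r • e.symm 1 = 0 := Subtype.ext (h _)
  rw [← e.symm.map_smul, smul_eq_mul, mul_one, LinearEquiv.map_eq_zero_iff] at hr0
  exact hr hr0

theorem isCompl_ker_span_singleton {R M : Type} [Ring R] [AddCommGroup M] [Module R M]
    {π : M →ₗ[R] R} {m : M} (hπ : π m = 1) : IsCompl (LinearMap.ker π) (R ∙ m) := by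
  constructor
  · rw [Submodule.disjoint_def]
    rintro x hx hxm
    obtain ⟨c, rfl⟩ := Submodule.mem_span_singleton.mp hxm
    rw [LinearMap.mem_ker, map_smul, hπ, smul_eq_mul, mul_one] at hx
    rw [hx, zero_smul]
  · rw [codisjoint_iff, eq_top_iff]
    intro x _
    refine Submodule.mem_sup.mpr
      ⟨x - π x • m, ?_, π x • m, Submodule.mem_span_singleton.mpr ⟨_, rfl⟩, sub_add_cancel x _⟩
    rw [LinearMap.mem_ker, map_sub, map_smul, hπ, smul_eq_mul, mul_one, sub_self]

def IsBasisOfComplement (R : Type) {M ι : Type} [Ring R] [AddCommGroup M] [Module R M]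
    (Q Q₁ : Submodule R M) (v : ι → M) : Prop :=
  LinearIndependent R v ∧ Q₁ ⊓ Submodule.span R (Set.range v) = ⊥ ∧
    Q₁ ⊔ Submodule.span R (Set.range v) = Q

namespace IsBasisOfComplement

variable {R M : Type} [Ring R] [AddCommGroup M] [Module R M]

theorem self (Q : Submodule R M) : IsBasisOfComplement R Q Q (Fin.elim0 : Fin 0 → M) := by
  have hS : Submodule.span R (Set.range (Fin.elim0 : Fin 0 → M)) = ⊥ := by
    rw [Set.range_eq_empty, Submodule.span_empty]
  exact ⟨linearIndependent_empty_type, by rw [hS, inf_bot_eq], by rw [hS, sup_bot_eq]⟩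

theorem cons {k : ℕ} {Q Q₁ : Submodule R M} {v : Fin k → M} {π : M →ₗ[R] R} {m : M}
    (h : IsBasisOfComplement R (Q ⊓ LinearMap.ker π) Q₁ v) (hmQ : m ∈ Q) (hπ : π m = 1) :
    IsBasisOfComplement R Q Q₁ (Fin.cons m v) := by
  obtain ⟨hv, hinf, hsup⟩ := h
  set S := Submodule.span R (Set.range v)
  have hSπ : S ≤ LinearMap.ker π := le_sup_right.trans (hsup.trans_le inf_le_right)
  have hQ₁π : Q₁ ≤ LinearMap.ker π := le_sup_left.trans (hsup.trans_le inf_le_right)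
  have hcompl := isCompl_ker_span_singleton hπ
  have hmQ' : R ∙ m ≤ Q := (Submodule.span_singleton_le_iff_mem _ _).mpr hmQ
  refine ⟨hv.finCons' m v fun c y hy hcy => ?_, ?_, ?_⟩
  · simpa [hπ, LinearMap.mem_ker.mp (hSπ hy)] using congr(π $hcy)
  all_goals rw [Fin.range_cons, Submodule.span_insert]
  · calc Q₁ ⊓ (R ∙ m ⊔ S)
        = Q₁ ⊓ ((S ⊔ R ∙ m) ⊓ LinearMap.ker π) := by
          rw [inf_comm _ (LinearMap.ker π), ← inf_assoc, inf_eq_left.mpr hQ₁π, sup_comm]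
      _ = ⊥ := by rw [sup_inf_assoc_of_le _ hSπ, hcompl.symm.inf_eq_bot, sup_bot_eq, hinf]
  · calc Q₁ ⊔ (R ∙ m ⊔ S)
        = (R ∙ m ⊔ LinearMap.ker π) ⊓ Q := by
          rw [sup_inf_assoc_of_le _ hmQ', sup_left_comm, hsup, inf_comm]
      _ = Q := by rw [sup_comm, hcompl.sup_eq_top, top_inf_eq]

end IsBasisOfComplement

section GroupAlgebra

variable {F G : Type} [Field F] [Group G] [Fintype G]

theorem of_mul_normElem (g : G) : of F G g * normElem F G = normElem F G := by
  rw [normElem, Finset.mul_sum]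
  exact Fintype.sum_equiv (Equiv.mulLeft g) _ _ fun h => by simp

theorem normElem_mul_of (g : G) : normElem F G * of F G g = normElem F G := by
  rw [normElem, Finset.sum_mul]
  exact Fintype.sum_equiv (Equiv.mulRight g) _ _ fun h => by simp

theorem coeff_normElem (g : G) : (normElem F G).coeff g = 1 := by
  classical
  simp [normElem, MonoidAlgebra.coeff_sum, Finsupp.finsetSum_apply, Finsupp.single_apply]

theorem normElem_ne_zero : normElem F G ≠ 0 := fun h => by
  simpa [h] using coeff_normElem (F := F) (1 : G)

theorem eq_coeff_one_smul_normElem {x : MonoidAlgebra F G} (hx : ∀ g : G, of F G g * x = x) :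
    x = x.coeff 1 • normElem F G := by
  ext g
  rw [coeff_smul, Finsupp.smul_apply, coeff_normElem, smul_eq_mul, mul_one]
  conv_lhs => rw [← hx g]
  rw [of_apply, coeff_single_mul_apply, inv_mul_cancel, one_mul]

theorem exists_normElem_mul_eq_smul (x : MonoidAlgebra F G) :
    ∃ c : F, normElem F G * x = c • normElem F G := by
  induction x using MonoidAlgebra.induction_on with
  | of g => exact ⟨1, by rw [normElem_mul_of, one_smul]⟩
  | add x y hx hy =>
    obtain ⟨c, hc⟩ := hx
    obtain ⟨d, hd⟩ := hy
    exact ⟨c + d, by rw [mul_add, hc, hd, add_smul]⟩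
  | smul r x hx =>
    obtain ⟨c, hc⟩ := hx
    exact ⟨r * c, by rw [mul_smul_comm, hc, smul_smul]⟩

namespace IsPGroup

variable {p : ℕ} [Fact p.Prime] [CharP F p]

theorem exists_ne_zero_forall_smul_eq (hG : IsPGroup p G) (V : Type) [AddCommGroup V]
    [Module F V] [Module (MonoidAlgebra F G) V] [IsScalarTower F (MonoidAlgebra F G) V]
    [Nontrivial V] : ∃ v : V, v ≠ 0 ∧ ∀ g : G, of F G g • v = v := by
  obtain ⟨v₀, hv₀⟩ := exists_ne (0 : V)
  let : Algebra (ZMod p) F := ZMod.algebra F p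
  let : Module (ZMod p) V := Module.compHom V (algebraMap (ZMod p) F)
  let : MulAction G V := MulAction.compHom V (of F G)
  let translate (g : G) : V →ₗ[ZMod p] V :=
    { toFun v := g • v
      map_add' := smul_add (of F G g)
      map_smul' c v := smul_algebra_smul_comm (algebraMap (ZMod p) F c) (of F G g) v }
  let W := Submodule.span (ZMod p) (Set.range fun g : G => g • v₀)
  have hW (g : G) : W ≤ W.comap (translate g) :=
    Submodule.span_le.mpr <| Set.range_subset_iff.mpr fun h =>
      Submodule.subset_span ⟨g * h, mul_smul g h v₀⟩
  let W' : SubMulAction G V := ⟨W, fun g _ hv => hW g hv⟩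
  have hv₀W : v₀ ∈ W := Submodule.subset_span ⟨1, one_smul G v₀⟩
  have : Module.Finite (ZMod p) W := FiniteDimensional.span_of_finite _ (Set.finite_range _)
  have : Finite W := Module.finite_of_finite (ZMod p)
  have := Fintype.ofFinite W
  have : Nontrivial W := ⟨⟨⟨v₀, hv₀W⟩, 0, fun h => hv₀ congr($h.1)⟩⟩
  have hp : p ∣ Nat.card W' := by
    rw [show Nat.card W' = Nat.card W from rfl, Nat.card_eq_fintype_card,
      Module.card_eq_pow_finrank (K := ZMod p), ZMod.card]
    exact dvd_pow_self p Module.finrank_pos.ne'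
  obtain ⟨v, hv, hv0⟩ := hG.exists_fixed_point_of_prime_dvd_card_of_fixed_point W' hp
    (a := ⟨0, W.zero_mem⟩) fun g => Subtype.ext (smul_zero (of F G g))
  exact ⟨v, fun h => hv0 (Subtype.ext h.symm), fun g => congr($(hv g).1)⟩

theorem isUnit_of_normElem_mul_ne_zero (hG : IsPGroup p G) {a : MonoidAlgebra F G}
    (ha : normElem F G * a ≠ 0) : IsUnit a := by
  let ρ := LinearMap.toSpanSingleton (MonoidAlgebra F G) (MonoidAlgebra F G) a
  have hρ : Function.Injective ρ := by
    rw [← LinearMap.ker_eq_bot]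
    by_contra hker
    have : Nontrivial (LinearMap.ker ρ) := Submodule.nontrivial_iff_ne_bot.mpr hker
    obtain ⟨⟨x, hxa⟩, hx0, hx⟩ := hG.exists_ne_zero_forall_smul_eq (F := F) (LinearMap.ker ρ)
    have hxN : x = x.coeff 1 • normElem F G :=
      eq_coeff_one_smul_normElem fun g => congr($(hx g).1)
    have hc : x.coeff 1 ≠ 0 := fun hc => hx0 (Subtype.ext (hxN.trans (by rw [hc, zero_smul]; rfl)))
    have hxa : x * a = 0 := hxa
    rw [hxN, smul_mul_assoc, smul_eq_zero] at hxa
    exact hxa.elim hc ha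
  have : IsArtinianRing (MonoidAlgebra F G) := IsArtinianRing.of_finite F _
  obtain ⟨b, hb⟩ := (LinearMap.injective_iff_surjective (f := ρ.restrictScalars F)).mp hρ 1
  exact IsUnit.of_mul_eq_one_right b hb

end IsPGroup

section Module

variable {M : Type} [AddCommGroup M] [Module F M] [Module (MonoidAlgebra F G) M]

section IsScalarTower

variable [IsScalarTower F (MonoidAlgebra F G) M]

/-- Frobenius reciprocity `Hom_F(M, F) → Hom_{F G}(M, F G)`: `x ↦ ∑ g, l (g⁻¹ • x) • g`. -/
noncomputable def liftDual (l : M →ₗ[F] F) : M →ₗ[MonoidAlgebra F G] MonoidAlgebra F G :=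
  equivariantOfLinearOfComm (∑ g : G, lsingle g ∘ₗ l ∘ₗ GroupSMul.linearMap F M g⁻¹)
    fun h x => by
      simp only [LinearMap.sum_apply, LinearMap.comp_apply, lsingle_apply,
        GroupSMul.linearMap_apply, smul_eq_mul, Finset.mul_sum, single_mul_single, one_mul]
      refine Fintype.sum_equiv (Equiv.mulLeft h⁻¹) _ _ fun g => ?_
      simp [smul_smul, single_mul_single]

theorem normElem_mul_liftDual (l : M →ₗ[F] F) (x : M) :
    normElem F G * liftDual l x = l (normElem F G • x) • normElem F G := by
  rw [← smul_eq_mul, ← map_smul, liftDual, equivariantOfLinearOfComm_apply]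
  simp only [LinearMap.sum_apply, LinearMap.comp_apply, GroupSMul.linearMap_apply, lsingle_apply,
    ← of_apply, smul_smul, of_mul_normElem]
  conv_rhs => enter [2]; rw [normElem]
  rw [Finset.smul_sum]
  simp only [of_apply, smul_single', mul_one]

theorem IsPGroup.exists_linearMap_apply_eq_one {p : ℕ} [Fact p.Prime] [CharP F p]
    (hG : IsPGroup p G) {m : M} (hm : normElem F G • m ≠ 0) :
    ∃ π : M →ₗ[MonoidAlgebra F G] MonoidAlgebra F G, π m = 1 := by
  obtain ⟨l, hl⟩ : ∃ l : M →ₗ[F] F, l (normElem F G • m) ≠ 0 := by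
    by_contra! h
    exact hm ((Module.forall_dual_apply_eq_zero_iff F _).mp h)
  have hu : IsUnit (liftDual l m) := hG.isUnit_of_normElem_mul_ne_zero <| by
    rw [normElem_mul_liftDual]
    exact smul_ne_zero hl normElem_ne_zero
  refine ⟨LinearMap.toSpanSingleton _ _ ↑hu.unit⁻¹ ∘ₗ liftDual l, ?_⟩
  simp

end IsScalarTower

section SMulCommClass

variable [SMulCommClass (MonoidAlgebra F G) F M]

theorem range_normMap_le_fixedSub : LinearMap.range (normMap F G M) ≤ fixedSub F G M := by
  rintro _ ⟨x, rfl⟩ g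
  change of F G g • normElem F G • x = normElem F G • x
  rw [← mul_smul, of_mul_normElem]

theorem finrank_range_normMap_add_finrank_quotient [FiniteDimensional F M] :
    Module.finrank F (LinearMap.range (normMap F G M)) + Module.finrank F
        (↥(fixedSub F G M) ⧸
          Submodule.comap (fixedSub F G M).subtype (LinearMap.range (normMap F G M))) =
      Module.finrank F (fixedSub F G M) := by
  rw [← (Submodule.comapSubtypeEquivOfLe range_normMap_le_fixedSub).finrank_eq, add_comm,
    Submodule.finrank_quotient_add_finrank]

end SMulCommClass

section NormSubmodule

variable [IsScalarTower F (MonoidAlgebra F G) M] [SMulCommClass (MonoidAlgebra F G) F M]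

noncomputable def normSubmodule (Q : Submodule (MonoidAlgebra F G) M) : Submodule F M :=
  (Q.restrictScalars F).map (normMap F G M)

theorem normSubmodule_eq_bot_iff {Q : Submodule (MonoidAlgebra F G) M} :
    normSubmodule Q = ⊥ ↔ ∀ x ∈ Q, normElem F G • x = 0 := by
  simp [normSubmodule, eq_bot_iff, SetLike.le_def, normMap]

theorem normSubmodule_top :
    normSubmodule (⊤ : Submodule (MonoidAlgebra F G) M) = LinearMap.range (normMap F G M) := by
  rw [normSubmodule, Submodule.restrictScalars_top, Submodule.map_top]

theorem normSubmodule_eq_sup_span {Q : Submodule (MonoidAlgebra F G) M}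
    {π : M →ₗ[MonoidAlgebra F G] MonoidAlgebra F G} {m : M} (hmQ : m ∈ Q) (hπ : π m = 1) :
    normSubmodule Q = normSubmodule (Q ⊓ LinearMap.ker π) ⊔ F ∙ (normElem F G • m) := by
  refine le_antisymm ?_ <|
    sup_le (Submodule.map_mono (Submodule.restrictScalars_mono F inf_le_left)) ?_
  · rintro _ ⟨x, hx, rfl⟩
    obtain ⟨c, hc⟩ := exists_normElem_mul_eq_smul (π x)
    have hx' : x - π x • m ∈ Q ⊓ LinearMap.ker π :=
      ⟨Q.sub_mem hx (Q.smul_mem _ hmQ), by simp [hπ]⟩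
    have hsplit : normMap F G M x = normMap F G M (x - π x • m) + c • (normElem F G • m) := by
      simp [normMap, smul_sub, ← mul_smul, hc]
    rw [hsplit]
    exact Submodule.add_mem_sup ⟨_, hx', rfl⟩
      (Submodule.smul_mem _ c (Submodule.mem_span_singleton_self _))
  · rw [Submodule.span_singleton_le_iff_mem]
    exact ⟨m, hmQ, rfl⟩

theorem disjoint_normSubmodule_span {Q : Submodule (MonoidAlgebra F G) M}
    {π : M →ₗ[MonoidAlgebra F G] MonoidAlgebra F G} {m : M} (hπ : π m = 1) :
    Disjoint (normSubmodule (Q ⊓ LinearMap.ker π)) (F ∙ (normElem F G • m)) := by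
  rw [Submodule.disjoint_def]
  rintro _ ⟨x, ⟨-, hx⟩, rfl⟩ hxm
  obtain ⟨c, hc⟩ := Submodule.mem_span_singleton.mp hxm
  have hπx : π (normMap F G M x) = c • normElem F G := by
    rw [← hc, LinearMap.map_smul_of_tower, map_smul, hπ, smul_eq_mul, mul_one]
  rw [show π (normMap F G M x) = 0 by simp [normMap, LinearMap.mem_ker.mp hx]] at hπx
  rw [← hc, (smul_eq_zero.mp hπx.symm).resolve_right normElem_ne_zero, zero_smul]

theorem finrank_normSubmodule_inf_ker_add_one [FiniteDimensional F M]
    {Q : Submodule (MonoidAlgebra F G) M}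
    {π : M →ₗ[MonoidAlgebra F G] MonoidAlgebra F G} {m : M} (hmQ : m ∈ Q) (hπ : π m = 1) :
    Module.finrank F (normSubmodule (Q ⊓ LinearMap.ker π)) + 1 =
      Module.finrank F (normSubmodule Q) := by
  have hNm : normElem F G • m ≠ 0 := fun h => normElem_ne_zero (F := F) (G := G) <| by
    simpa [hπ] using congr(π $h)
  rw [normSubmodule_eq_sup_span hmQ hπ, ← finrank_span_singleton (K := F) hNm,
    ← Submodule.finrank_sup_add_finrank_inf_eq, (disjoint_normSubmodule_span hπ).eq_bot,
    finrank_bot, add_zero]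

theorem IsPGroup.exists_isBasisOfComplement {p : ℕ} [Fact p.Prime] [CharP F p]
    (hG : IsPGroup p G) [FiniteDimensional F M] (k : ℕ) :
    ∀ Q : Submodule (MonoidAlgebra F G) M, Module.finrank F (normSubmodule Q) = k →
      ∃ (Q₁ : Submodule (MonoidAlgebra F G) M) (v : Fin k → M),
        IsBasisOfComplement (MonoidAlgebra F G) Q Q₁ v ∧ normSubmodule Q₁ = ⊥ := by
  induction k with
  | zero => exact fun Q hQ => ⟨Q, _, .self Q, Submodule.finrank_eq_zero.mp hQ⟩
  | succ k ih =>
    intro Q hQ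
    obtain ⟨m, hmQ, hm⟩ : ∃ m ∈ Q, normElem F G • m ≠ 0 := by
      by_contra! h
      rw [← normSubmodule_eq_bot_iff] at h
      rw [h, finrank_bot] at hQ
      exact k.succ_ne_zero hQ.symm
    obtain ⟨π, hπ⟩ := hG.exists_linearMap_apply_eq_one hm
    obtain ⟨Q₁, v, hv, hQ₁⟩ := ih (Q ⊓ LinearMap.ker π) <| by
      have := finrank_normSubmodule_inf_ker_add_one hmQ hπ
      omega
    exact ⟨Q₁, Fin.cons m v, hv.cons hmQ hπ, hQ₁⟩

end NormSubmodule

end Module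

end GroupAlgebra

/-- Over a field of characteristic `p` and a finite `p`-group `G`, if
`n = dim H⁰(G,M) - dim Ĥ⁰(G,M)` (where `Ĥ⁰(G,M) = M^G/N·M`), then `M ≅ M₁ ⊕ (F G)ⁿ`
with `M₁` having no projective (equivalently free) direct summand. -/
theorem stmt5 (p : ℕ) [Fact p.Prime] (F : Type) [Field F] [CharP F p]
    (G : Type) [Group G] [Fintype G] (hG : IsPGroup p G)
    (M : Type) [AddCommGroup M] [Module F M] [Module (MonoidAlgebra F G) M]
    [IsScalarTower F (MonoidAlgebra F G) M] [SMulCommClass (MonoidAlgebra F G) F M]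
    [FiniteDimensional F M] (n : ℕ)
    (hn : n + Module.finrank F
        (↥(fixedSub F G M) ⧸
          Submodule.comap (fixedSub F G M).subtype (LinearMap.range (normMap F G M)))
      = Module.finrank F (fixedSub F G M)) :
    ∃ (M₁ P : Submodule (MonoidAlgebra F G) M), IsCompl M₁ P ∧
      Nonempty (P ≃ₗ[MonoidAlgebra F G] (Fin n → MonoidAlgebra F G)) ∧
      NoFreeSummand (MonoidAlgebra F G) ↥M₁ := by
  have hrank : Module.finrank F (normSubmodule (⊤ : Submodule (MonoidAlgebra F G) M)) = n := by
    have := finrank_range_normMap_add_finrank_quotient (F := F) (G := G) (M := M)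
    rw [normSubmodule_top]
    omega
  obtain ⟨M₁, v, ⟨hv, hinf, hsup⟩, hM₁⟩ := hG.exists_isBasisOfComplement n ⊤ hrank
  refine ⟨M₁, _, ⟨disjoint_iff.mpr hinf, codisjoint_iff.mpr hsup⟩,
    ⟨(Module.Basis.span hv).equivFun⟩,
    noFreeSummand_of_smul_eq_zero normElem_ne_zero fun x => Subtype.ext ?_⟩
  exact normSubmodule_eq_bot_iff.mp hM₁ x x.2
end

section
/- As a consequence of the relations y^p·X = (x,y)·Y^{p-1} and x^p·Y = -(x,y)·X^{p-1} in the module M = Φ(G)/Φ²(G), one has (x, y)·X^{p-1}·Y^{p-1} = 0 in M for any x, y ∈ G. -/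
/-- The commutator `(a,b) = a⁻¹b⁻¹ab`. -/
def cmt {G : Type*} [Group G] (a b : G) : G := a⁻¹ * b⁻¹ * a * b

/-- Conjugation `a^b = b⁻¹ab`. -/
def cnj {G : Type*} [Group G] (a b : G) : G := b⁻¹ * a * b

/-- The Frattini-type subgroup `Φ(G) = G^p (G,G)`. -/
def phiSub (p : ℕ) (G : Type*) [Group G] : Subgroup G :=
  Subgroup.closure ({x | ∃ g : G, x = g ^ p} ∪ {x | ∃ a b : G, x = cmt a b})

/-- `Φ²(G) = Φ(Φ(G))`, viewed as a subgroup of `G`. -/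
def phi2Sub (p : ℕ) (G : Type*) [Group G] : Subgroup G :=
  (phiSub p ↥(phiSub p G)).map (phiSub p G).subtype

/-- The coefficient of `t^i` in the expansion of `(t-1)^{p-1}` over `ℤ`. -/
def sgnBinom (p i : ℕ) : ℤ := (-1) ^ (p - 1 - i) * (Nat.choose (p - 1) i : ℤ)

/-!
Modulo `Φ²(G)`, the subgroup `Φ(G)` becomes an abelian normal subgroup of exponent `p`. Since
`C(p-1, i) ≡ (-1)^i (mod p)`, every exponent `sgnBinom p i * sgnBinom p j` is `≡ 1 (mod p)`, so the product reduces
to `∏_{i,j<p} (x,y)^{x^i y^j}`. Whenever `(x,y)` lies in an abelian normal subgroup, the products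
telescope: `∏_{i<n} (x,y)^{x^i} = (x^n, y)` and `∏_{j<n} (x^n,y)^{y^j} = (x^n, y^n)`. Hence the
product is `(x^p, y^p)`, a commutator of two elements of `Φ(G)`.
-/

open Finset
open scoped IsMulCommutative

theorem list_prod_map_range {M : Type*} [CommMonoid M] (f : ℕ → M) (n : ℕ) :
    ((List.range n).map f).prod = ∏ i ∈ range n, f i := rfl

section Commutators

variable {Q : Type*} [Group Q]

theorem map_cmt {H : Type*} [Group H] (f : Q →* H) (a b : Q) :
    f (cmt a b) = cmt (f a) (f b) := by simp [cmt]

theorem map_cnj {H : Type*} [Group H] (f : Q →* H) (a b : Q) :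
    f (cnj a b) = cnj (f a) (f b) := by simp [cnj]

theorem mul_comm_of_cmt_eq_one {a b : Q} (h : cmt a b = 1) : a * b = b * a := by
  rw [show cmt a b = (b * a)⁻¹ * (a * b) by simp only [cmt]; group, inv_mul_eq_one] at h
  exact h.symm

theorem cmt_pow_succ_left (x y : Q) (k : ℕ) :
    cmt (x ^ (k + 1)) y = cnj (cmt (x ^ k) y) x * cmt x y := by
  simp only [cmt, cnj, pow_succ]; group

theorem cmt_pow_succ_right (m y : Q) (k : ℕ) :
    cmt m (y ^ (k + 1)) = cmt m (y ^ k) * cnj (cmt m y) (y ^ k) := by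
  simp only [cmt, cnj, pow_succ]; group

variable (N : Subgroup Q) [N.Normal]

theorem coe_conjNormal_inv_apply (g : Q) (n : N) :
    ((MulAut.conjNormal (H := N) g)⁻¹ n : Q) = cnj (n : Q) g :=
  MulAut.conjNormal_inv_apply g n

theorem conjNormal_inv_mul_apply (g h : Q) (n : N) :
    (MulAut.conjNormal (H := N) (g * h))⁻¹ n =
      (MulAut.conjNormal (H := N) h)⁻¹ ((MulAut.conjNormal (H := N) g)⁻¹ n) := by
  rw [map_mul, mul_inv_rev, MulAut.mul_apply]

variable [IsMulCommutative N]

theorem coe_prod_conj_pow_eq_cmt_pow_left {x y : Q} (c : N) (hc : (c : Q) = cmt x y) (k : ℕ) :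
    ((∏ i ∈ range k, (MulAut.conjNormal (H := N) (x ^ i))⁻¹ c : N) : Q) = cmt (x ^ k) y := by
  induction k with
  | zero => simp [cmt]
  | succ k ih =>
    simp only [prod_range_succ', pow_succ, conjNormal_inv_mul_apply, ← map_prod, pow_zero,
      map_one, inv_one, MulAut.one_apply, Subgroup.coe_mul, coe_conjNormal_inv_apply, ih, hc]
    rw [← pow_succ, cmt_pow_succ_left]

theorem coe_prod_conj_pow_eq_cmt_pow_right {m y : Q} (d : N) (hd : (d : Q) = cmt m y) (k : ℕ) :
    ((∏ j ∈ range k, (MulAut.conjNormal (H := N) (y ^ j))⁻¹ d : N) : Q) = cmt m (y ^ k) := by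
  induction k with
  | zero => simp [cmt]
  | succ k ih =>
    rw [prod_range_succ, Subgroup.coe_mul, ih, coe_conjNormal_inv_apply, hd, cmt_pow_succ_right]

theorem list_prod_cnj_cmt_eq_cmt_pow_pow {x y : Q} (hc : cmt x y ∈ N) (n : ℕ) :
    ((List.range n).map fun i =>
      ((List.range n).map fun j => cnj (cmt x y) (x ^ i * y ^ j)).prod).prod =
      cmt (x ^ n) (y ^ n) := by
  set c : N := ⟨cmt x y, hc⟩
  set d : N := ∏ i ∈ range n, (MulAut.conjNormal (H := N) (x ^ i))⁻¹ c
  have hd : (d : Q) = cmt (x ^ n) y := coe_prod_conj_pow_eq_cmt_pow_left N c rfl n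
  have key : ∏ i ∈ range n, ∏ j ∈ range n, (MulAut.conjNormal (H := N) (x ^ i * y ^ j))⁻¹ c =
      ∏ j ∈ range n, (MulAut.conjNormal (H := N) (y ^ j))⁻¹ d := by
    simp only [conjNormal_inv_mul_apply, d, map_prod]
    exact prod_comm
  rw [← coe_prod_conj_pow_eq_cmt_pow_right N d hd, ← key]
  simp only [← list_prod_map_range, Subgroup.val_list_prod, List.map_map, Function.comp_def,
    coe_conjNormal_inv_apply, c]

end Commutators

theorem zpow_eq_self_of_modEq_one {Q : Type*} [Group Q] {g : Q} {p : ℕ} (hg : g ^ p = 1) {k : ℤ}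
    (hk : k ≡ 1 [ZMOD p]) : g ^ k = g := by
  rw [zpow_eq_zpow_emod' k hg, hk, ← zpow_eq_zpow_emod' 1 hg, zpow_one]

section Coefficients

variable {p : ℕ} [hp : Fact p.Prime]

theorem ZMod.natCast_choose_pred {i : ℕ} (hi : i < p) :
    ((p - 1).choose i : ZMod p) = (-1) ^ i := by
  induction i with
  | zero => simp
  | succ i ih =>
    have hpascal : p.choose (i + 1) = (p - 1).choose i + (p - 1).choose (i + 1) := by
      conv_lhs => rw [← Nat.sub_add_cancel hp.out.pos]
      exact Nat.choose_succ_succ _ _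
    have hdvd : (p.choose (i + 1) : ZMod p) = 0 :=
      (ZMod.natCast_eq_zero_iff _ _).2 (hp.out.dvd_choose_self i.succ_ne_zero hi)
    rw [hpascal, Nat.cast_add, ih (by omega)] at hdvd
    rw [pow_succ, mul_neg_one, eq_neg_iff_add_eq_zero, add_comm, hdvd]

theorem sgnBinom_modEq_one {i : ℕ} (hi : i < p) : sgnBinom p i ≡ 1 [ZMOD p] := by
  rw [← ZMod.intCast_eq_intCast_iff]
  have hsplit : p - 1 = (p - 1 - i) + i := by omega
  rw [sgnBinom, Int.cast_mul, Int.cast_pow, Int.cast_neg, Int.cast_one, Int.cast_natCast,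
    ZMod.natCast_choose_pred hi, ← pow_add, ← hsplit,
    ZMod.pow_card_sub_one_eq_one (neg_ne_zero.2 one_ne_zero)]

end Coefficients

section Frattini

variable (p : ℕ) {G : Type*} [Group G]

theorem pow_mem_phiSub (g : G) : g ^ p ∈ phiSub p G :=
  Subgroup.subset_closure (Or.inl ⟨g, rfl⟩)

theorem cmt_mem_phiSub (a b : G) : cmt a b ∈ phiSub p G :=
  Subgroup.subset_closure (Or.inr ⟨a, b, rfl⟩)

theorem map_phiSub_le {H : Type*} [Group H] (f : G →* H) : (phiSub p G).map f ≤ phiSub p H := by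
  rw [phiSub, MonoidHom.map_closure, Subgroup.closure_le]
  rintro _ ⟨g, ⟨a, rfl⟩ | ⟨a, b, rfl⟩, rfl⟩
  · rw [map_pow]; exact pow_mem_phiSub p (f a)
  · rw [map_cmt]; exact cmt_mem_phiSub p _ _

instance phiSub_characteristic : (phiSub p G).Characteristic :=
  Subgroup.characteristic_iff_map_le.2 fun φ => map_phiSub_le p φ.toMonoidHom

instance phi2Sub_normal : (phi2Sub p G).Normal :=
  ConjAct.normal_of_characteristic_of_normal

variable {p}

theorem pow_mem_phi2Sub {a : G} (ha : a ∈ phiSub p G) : a ^ p ∈ phi2Sub p G :=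
  ⟨⟨a, ha⟩ ^ p, pow_mem_phiSub p _, rfl⟩

theorem cmt_mem_phi2Sub {a b : G} (ha : a ∈ phiSub p G) (hb : b ∈ phiSub p G) :
    cmt a b ∈ phi2Sub p G :=
  ⟨cmt ⟨a, ha⟩ ⟨b, hb⟩, cmt_mem_phiSub p _ _, map_cmt _ _ _⟩

theorem cnj_mem_phiSub {a : G} (ha : a ∈ phiSub p G) (g : G) : cnj a g ∈ phiSub p G := by
  simpa [cnj] using Subgroup.Normal.conj_mem inferInstance a ha g⁻¹

theorem mk'_zpow_eq_self {a : G} (ha : a ∈ phiSub p G) {k : ℤ} (hk : k ≡ 1 [ZMOD p]) :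
    QuotientGroup.mk' (phi2Sub p G) a ^ k = QuotientGroup.mk' (phi2Sub p G) a := by
  refine zpow_eq_self_of_modEq_one ?_ hk
  rw [← map_pow, QuotientGroup.mk'_apply, QuotientGroup.eq_one_iff]
  exact pow_mem_phi2Sub ha

variable (p G)

instance map_phiSub_normal : ((phiSub p G).map (QuotientGroup.mk' (phi2Sub p G))).Normal :=
  Subgroup.Normal.map inferInstance _ (QuotientGroup.mk'_surjective _)

instance map_phiSub_isMulCommutative :
    IsMulCommutative ((phiSub p G).map (QuotientGroup.mk' (phi2Sub p G))) := by
  refine IsMulCommutative.of_setLike_mul_comm ?_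
  rintro _ ⟨a, ha, rfl⟩ _ ⟨b, hb, rfl⟩
  refine mul_comm_of_cmt_eq_one ?_
  rw [← map_cmt, QuotientGroup.mk'_apply, QuotientGroup.eq_one_iff]
  exact cmt_mem_phi2Sub ha hb

end Frattini

/-- The relation `(x,y) · X^{p-1} · Y^{p-1} = 0` in the module `Φ(G)/Φ²(G)`, written
multiplicatively: the product `∏_{i<p} ∏_{j<p} ((x,y)^{x^i y^j})^{c_i c_j}` lies in `Φ²(G)`,
where `c_i = (-1)^{p-1-i} C(p-1,i)` are the coefficients of `(t-1)^{p-1}`. -/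
theorem stmt12 (p : ℕ) [Fact p.Prime] {G : Type*} [Group G] (x y : G) :
    (((List.range p).map (fun i =>
        (((List.range p).map (fun j =>
          (cnj (cmt x y) (x ^ i * y ^ j)) ^ (sgnBinom p i * sgnBinom p j))).prod))).prod)
      ∈ phi2Sub p G := by
  set π := QuotientGroup.mk' (phi2Sub p G)
  have hterm : ∀ i ∈ List.range p, ∀ j ∈ List.range p,
      π (cnj (cmt x y) (x ^ i * y ^ j) ^ (sgnBinom p i * sgnBinom p j)) =
        cnj (cmt (π x) (π y)) (π x ^ i * π y ^ j) := by
    intro i hi j hj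
    rw [map_zpow, mk'_zpow_eq_self (cnj_mem_phiSub (cmt_mem_phiSub p x y) _)
      ((sgnBinom_modEq_one (List.mem_range.1 hi)).mul (sgnBinom_modEq_one (List.mem_range.1 hj))),
      map_cnj, map_cmt, map_mul, map_pow, map_pow]
  have hc : cmt (π x) (π y) ∈ (phiSub p G).map π := ⟨_, cmt_mem_phiSub p x y, map_cmt _ _ _⟩
  rw [← QuotientGroup.eq_one_iff, ← QuotientGroup.mk'_apply]
  calc _ = ((List.range p).map fun i => ((List.range p).map fun j =>
          cnj (cmt (π x) (π y)) (π x ^ i * π y ^ j)).prod).prod := by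
        rw [map_list_prod, List.map_map]
        refine congrArg List.prod (List.map_congr_left fun i hi => ?_)
        rw [Function.comp_apply, map_list_prod, List.map_map]
        exact congrArg List.prod (List.map_congr_left (hterm i hi))
    _ = cmt (π x ^ p) (π y ^ p) := list_prod_cnj_cmt_eq_cmt_pow_pow _ hc p
    _ = 1 := by
      rw [← map_pow, ← map_pow, ← map_cmt, QuotientGroup.mk'_apply, QuotientGroup.eq_one_iff]
      exact cmt_mem_phi2Sub (pow_mem_phiSub p x) (pow_mem_phiSub p y)
end
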